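/- For a three-qubit pure state |ψ⟩ = α₀|000⟩ + α₁e^{iθ}|100⟩ + α₂|101⟩ + α₃|110⟩ + α₄|111⟩ with α₀,…,α₄ ≥ 0, Σᵢ αᵢ² = 1 and θ ∈ [0,π], the exact identity S₁₂² + S₁₃² + τ₂₃² = 3 − (2α₀² − 1)² − 4α₀²α₁² − 4(α₁α₄ − α₂α₃)² − 8α₁α₂α₃α₄(1 − cosθ) holds; consequently S₁₂² + S₁₃² + [3f(ρ₂₃) − 2]² ≤ 3, and by symmetry S₁₂² + S₂₃² + [3f(ρ₁₃) − 2]² ≤ 3 and S₁₃² + S₂₃² + [3f(ρ₁₂) − 2]² ≤ 3. -/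

import Mathlib

/-- Squared steering observable S₁₂² of the reduced state ρ₁₂ of the three-qubit
pure state α₀|000⟩ + α₁e^{iθ}|100⟩ + α₂|101⟩ + α₃|110⟩ + α₄|111⟩. -/
noncomputable def S12sq (a0 a1 a2 a3 a4 θ : ℝ) : ℝ :=
  1 + 8 * a0 ^ 2 * a3 ^ 2 - 4 * a0 ^ 2 * a2 ^ 2 - 4 * a1 ^ 2 * a4 ^ 2
    - 4 * a2 ^ 2 * a3 ^ 2 + 8 * a1 * a2 * a3 * a4 * Real.cos θ

/-- Squared steering observable S₁₃² of the reduced state ρ₁₃. -/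
noncomputable def S13sq (a0 a1 a2 a3 a4 θ : ℝ) : ℝ :=
  1 + 8 * a0 ^ 2 * a2 ^ 2 - 4 * a0 ^ 2 * a3 ^ 2 - 4 * a1 ^ 2 * a4 ^ 2
    - 4 * a2 ^ 2 * a3 ^ 2 + 8 * a1 * a2 * a3 * a4 * Real.cos θ

/-- Squared steering observable S₂₃² of the reduced state ρ₂₃. -/
noncomputable def S23sq (a0 a1 a2 a3 a4 θ : ℝ) : ℝ :=
  1 - 4 * a0 ^ 2 * a2 ^ 2 - 4 * a0 ^ 2 * a3 ^ 2 + 8 * a1 ^ 2 * a4 ^ 2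
    + 8 * a2 ^ 2 * a3 ^ 2 - 16 * a1 * a2 * a3 * a4 * Real.cos θ

/-- Partial tangle τ₁₂ = 2α₀√(α₃²+α₄²). -/
noncomputable def tau12 (a0 a1 a2 a3 a4 θ : ℝ) : ℝ :=
  2 * a0 * Real.sqrt (a3 ^ 2 + a4 ^ 2)

/-- Partial tangle τ₁₃ = 2α₀√(α₂²+α₄²). -/
noncomputable def tau13 (a0 a1 a2 a3 a4 θ : ℝ) : ℝ :=
  2 * a0 * Real.sqrt (a2 ^ 2 + a4 ^ 2)

/-- Partial tangle τ₂₃ = 2√(α₀²α₄²+α₁²α₄²+α₂²α₃²−2α₁α₂α₃α₄cosθ). -/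
noncomputable def tau23 (a0 a1 a2 a3 a4 θ : ℝ) : ℝ :=
  2 * Real.sqrt (a0 ^ 2 * a4 ^ 2 + a1 ^ 2 * a4 ^ 2 + a2 ^ 2 * a3 ^ 2
    - 2 * a1 * a2 * a3 * a4 * Real.cos θ)

/-- Average teleportation fidelity f(ρ₁₂), determined by τ₁₂ = 3f(ρ₁₂) − 2. -/
noncomputable def fid12 (a0 a1 a2 a3 a4 θ : ℝ) : ℝ := (tau12 a0 a1 a2 a3 a4 θ + 2) / 3

/-- Average teleportation fidelity f(ρ₁₃), determined by τ₁₃ = 3f(ρ₁₃) − 2. -/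
noncomputable def fid13 (a0 a1 a2 a3 a4 θ : ℝ) : ℝ := (tau13 a0 a1 a2 a3 a4 θ + 2) / 3

/-- Average teleportation fidelity f(ρ₂₃), determined by τ₂₃ = 3f(ρ₂₃) − 2. -/
noncomputable def fid23 (a0 a1 a2 a3 a4 θ : ℝ) : ℝ := (tau23 a0 a1 a2 a3 a4 θ + 2) / 3

/-! The interference term is the only non-polynomial ingredient, and the law of cosines
`x² + y² − 2xy cos θ = (x − y cos θ)² + (y sin θ)² ≥ 0` controls it. Homogenising the constant
`1 = (Σ αᵢ²)²` with the normalisation, each defect `3 − (…)` becomes a sum of squares plus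
such a law-of-cosines term. The bound involving f(ρ₁₂) follows from the one involving f(ρ₁₃)
by the symmetry α₂ ↔ α₃. -/

theorem sq_add_sq_sub_two_mul_mul_cos_nonneg (x y θ : ℝ) :
    0 ≤ x ^ 2 + y ^ 2 - 2 * x * y * Real.cos θ := by
  have h : x ^ 2 + y ^ 2 - 2 * x * y * Real.cos θ
      = (x - y * Real.cos θ) ^ 2 + (y * Real.sin θ) ^ 2 := by
    linear_combination -y ^ 2 * Real.sin_sq_add_cos_sq θ
  rw [h]
  positivity

section ReducedStates

variable (a0 a1 a2 a3 a4 θ : ℝ)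

theorem S13sq_eq_S12sq_swap : S13sq a0 a1 a2 a3 a4 θ = S12sq a0 a1 a3 a2 a4 θ := by
  unfold S12sq S13sq
  ring

theorem S23sq_swap : S23sq a0 a1 a3 a2 a4 θ = S23sq a0 a1 a2 a3 a4 θ := by
  unfold S23sq
  ring

theorem tau13_sq : tau13 a0 a1 a2 a3 a4 θ ^ 2 = 4 * a0 ^ 2 * (a2 ^ 2 + a4 ^ 2) := by
  rw [tau13, mul_pow, mul_pow, Real.sq_sqrt (by positivity)]
  ring

theorem tau23_sq : tau23 a0 a1 a2 a3 a4 θ ^ 2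
    = 4 * (a0 ^ 2 * a4 ^ 2 + a1 ^ 2 * a4 ^ 2 + a2 ^ 2 * a3 ^ 2
      - 2 * a1 * a2 * a3 * a4 * Real.cos θ) := by
  have hcos := sq_add_sq_sub_two_mul_mul_cos_nonneg (a1 * a4) (a2 * a3) θ
  rw [tau23, mul_pow, Real.sq_sqrt (by linarith [sq_nonneg (a0 * a4)])]
  ring

theorem three_mul_fid13_sub_two : 3 * fid13 a0 a1 a2 a3 a4 θ - 2 = tau13 a0 a1 a2 a3 a4 θ := by
  rw [fid13]
  ring

theorem three_mul_fid23_sub_two : 3 * fid23 a0 a1 a2 a3 a4 θ - 2 = tau23 a0 a1 a2 a3 a4 θ := by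
  rw [fid23]
  ring

variable {a0 a1 a2 a3 a4 θ}

theorem S12sq_add_S13sq_add_tau23_sq
    (hsum : a0 ^ 2 + a1 ^ 2 + a2 ^ 2 + a3 ^ 2 + a4 ^ 2 = 1) :
    S12sq a0 a1 a2 a3 a4 θ + S13sq a0 a1 a2 a3 a4 θ + tau23 a0 a1 a2 a3 a4 θ ^ 2
      = 3 - (2 * a0 ^ 2 - 1) ^ 2 - 4 * a0 ^ 2 * a1 ^ 2 - 4 * (a1 * a4 - a2 * a3) ^ 2
        - 8 * a1 * a2 * a3 * a4 * (1 - Real.cos θ) := by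
  rw [tau23_sq, S12sq, S13sq]
  linear_combination (4 * a0 ^ 2) * hsum

theorem S12sq_add_S13sq_add_fid23_le
    (hsum : a0 ^ 2 + a1 ^ 2 + a2 ^ 2 + a3 ^ 2 + a4 ^ 2 = 1) :
    S12sq a0 a1 a2 a3 a4 θ + S13sq a0 a1 a2 a3 a4 θ
      + (3 * fid23 a0 a1 a2 a3 a4 θ - 2) ^ 2 ≤ 3 := by
  rw [three_mul_fid23_sub_two, S12sq_add_S13sq_add_tau23_sq hsum]
  linarith [sq_nonneg (2 * a0 ^ 2 - 1), sq_nonneg (a0 * a1),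
    sq_add_sq_sub_two_mul_mul_cos_nonneg (a1 * a4) (a2 * a3) θ]

theorem S12sq_add_S23sq_add_tau13_sq
    (hsum : a0 ^ 2 + a1 ^ 2 + a2 ^ 2 + a3 ^ 2 + a4 ^ 2 = 1) :
    S12sq a0 a1 a2 a3 a4 θ + S23sq a0 a1 a2 a3 a4 θ + tau13 a0 a1 a2 a3 a4 θ ^ 2
      = 3 - (a0 ^ 2 + a1 ^ 2 + a2 ^ 2 - a3 ^ 2 - a4 ^ 2) ^ 2 - 4 * a0 ^ 2 * a2 ^ 2
        - 4 * ((a1 * a3) ^ 2 + (a2 * a4) ^ 2 + 2 * (a1 * a3) * (a2 * a4) * Real.cos θ) := by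
  rw [tau13_sq, S12sq, S23sq]
  linear_combination (a0 ^ 2 + a1 ^ 2 + a2 ^ 2 + a3 ^ 2 + a4 ^ 2 + 1) * hsum

theorem S12sq_add_S23sq_add_fid13_le
    (hsum : a0 ^ 2 + a1 ^ 2 + a2 ^ 2 + a3 ^ 2 + a4 ^ 2 = 1) :
    S12sq a0 a1 a2 a3 a4 θ + S23sq a0 a1 a2 a3 a4 θ
      + (3 * fid13 a0 a1 a2 a3 a4 θ - 2) ^ 2 ≤ 3 := by
  rw [three_mul_fid13_sub_two, S12sq_add_S23sq_add_tau13_sq hsum]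
  linarith [sq_nonneg (a0 ^ 2 + a1 ^ 2 + a2 ^ 2 - a3 ^ 2 - a4 ^ 2), sq_nonneg (a0 * a2),
    sq_add_sq_sub_two_mul_mul_cos_nonneg (a1 * a3) (-(a2 * a4)) θ]

theorem S13sq_add_S23sq_add_fid12_le
    (hsum : a0 ^ 2 + a1 ^ 2 + a2 ^ 2 + a3 ^ 2 + a4 ^ 2 = 1) :
    S13sq a0 a1 a2 a3 a4 θ + S23sq a0 a1 a2 a3 a4 θ
      + (3 * fid12 a0 a1 a2 a3 a4 θ - 2) ^ 2 ≤ 3 := by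
  have h := S12sq_add_S23sq_add_fid13_le (a0 := a0) (a1 := a1) (a2 := a3) (a3 := a2) (a4 := a4) (θ := θ)
    (by linear_combination hsum)
  rwa [← S13sq_eq_S12sq_swap, S23sq_swap] at h

end ReducedStates

theorem stmt14_general (a0 a1 a2 a3 a4 θ : ℝ)
    (hsum : a0 ^ 2 + a1 ^ 2 + a2 ^ 2 + a3 ^ 2 + a4 ^ 2 = 1) :
    S12sq a0 a1 a2 a3 a4 θ + S13sq a0 a1 a2 a3 a4 θ + tau23 a0 a1 a2 a3 a4 θ ^ 2
        = 3 - (2 * a0 ^ 2 - 1) ^ 2 - 4 * a0 ^ 2 * a1 ^ 2 - 4 * (a1 * a4 - a2 * a3) ^ 2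
          - 8 * a1 * a2 * a3 * a4 * (1 - Real.cos θ) ∧
    S12sq a0 a1 a2 a3 a4 θ + S13sq a0 a1 a2 a3 a4 θ
        + (3 * fid23 a0 a1 a2 a3 a4 θ - 2) ^ 2 ≤ 3 ∧
    S12sq a0 a1 a2 a3 a4 θ + S23sq a0 a1 a2 a3 a4 θ
        + (3 * fid13 a0 a1 a2 a3 a4 θ - 2) ^ 2 ≤ 3 ∧
    S13sq a0 a1 a2 a3 a4 θ + S23sq a0 a1 a2 a3 a4 θ
        + (3 * fid12 a0 a1 a2 a3 a4 θ - 2) ^ 2 ≤ 3 :=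
  ⟨S12sq_add_S13sq_add_tau23_sq hsum, S12sq_add_S13sq_add_fid23_le hsum,
    S12sq_add_S23sq_add_fid13_le hsum, S13sq_add_S23sq_add_fid12_le hsum⟩

/-- For a three-qubit pure state α₀|000⟩ + α₁e^{iθ}|100⟩ + α₂|101⟩ + α₃|110⟩ + α₄|111⟩:
the exact identity
S₁₂² + S₁₃² + τ₂₃² = 3 − (2α₀²−1)² − 4α₀²α₁² − 4(α₁α₄−α₂α₃)² − 8α₁α₂α₃α₄(1−cosθ)
holds; consequently S₁₂² + S₁₃² + [3f(ρ₂₃)−2]² ≤ 3, and by symmetry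
S₁₂² + S₂₃² + [3f(ρ₁₃)−2]² ≤ 3 and S₁₃² + S₂₃² + [3f(ρ₁₂)−2]² ≤ 3. -/
theorem stmt14 (a0 a1 a2 a3 a4 θ : ℝ)
    (h0 : 0 ≤ a0) (h1 : 0 ≤ a1) (h2 : 0 ≤ a2) (h3 : 0 ≤ a3) (h4 : 0 ≤ a4)
    (hsum : a0 ^ 2 + a1 ^ 2 + a2 ^ 2 + a3 ^ 2 + a4 ^ 2 = 1)
    (hθ : θ ∈ Set.Icc 0 Real.pi) :
    S12sq a0 a1 a2 a3 a4 θ + S13sq a0 a1 a2 a3 a4 θ + tau23 a0 a1 a2 a3 a4 θ ^ 2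
        = 3 - (2 * a0 ^ 2 - 1) ^ 2 - 4 * a0 ^ 2 * a1 ^ 2 - 4 * (a1 * a4 - a2 * a3) ^ 2
          - 8 * a1 * a2 * a3 * a4 * (1 - Real.cos θ) ∧
    S12sq a0 a1 a2 a3 a4 θ + S13sq a0 a1 a2 a3 a4 θ
        + (3 * fid23 a0 a1 a2 a3 a4 θ - 2) ^ 2 ≤ 3 ∧
    S12sq a0 a1 a2 a3 a4 θ + S23sq a0 a1 a2 a3 a4 θ
        + (3 * fid13 a0 a1 a2 a3 a4 θ - 2) ^ 2 ≤ 3 ∧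
    S13sq a0 a1 a2 a3 a4 θ + S23sq a0 a1 a2 a3 a4 θ
        + (3 * fid12 a0 a1 a2 a3 a4 θ - 2) ^ 2 ≤ 3 :=
  stmt14_general a0 a1 a2 a3 a4 θ hsum
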